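/- (Corollary 2.5, properties of the corrector) Suppose ℙ satisfies Assumption 1.1 and let Φ_0, Φ, χ_0 = Π − Φ_0 and χ = Π − Φ be as in Theorem 2.3. Then: (i) χ_0(·, ê) ∈ L¹(Ω, ℙ) with E[χ_0(ω, ê)] = 0 for every unit coordinate vector ê ∈ {±e_1, …, ±e_d}; and (ii) for ℙ-a.e. ω, all t ∈ ℝ and all x ∈ ℤ^d, χ(ω,t,x) = χ_0(τ_{t,0}ω, x) + ∫_0^t (L_s^ω Φ_0(τ_{s,0}ω, ·))(0) ds. -/
import Mathlib


open MeasureTheory ProbabilityTheory Filter Set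
open scoped NNReal ENNReal

noncomputable section

/-- Vertices of the `d`-dimensional Euclidean lattice. -/
abbrev V (d : ℕ) := Fin d → ℤ

/-- Nearest-neighbour relation `x ∼ y` on `ℤ^d`. -/
def adj {d : ℕ} (x y : V d) : Prop := (∑ i, (x i - y i).natAbs) = 1

/-- The space of time-dependent, symmetric, positive conductances on the
nearest-neighbour edges of `ℤ^d` (conductances vanish on non-edges). -/
abbrev EnvD (d : ℕ) : Type :=
  {ω : ℝ → V d → V d → ℝ //
    ∀ t x y, (adj x y → 0 < ω t x y) ∧ (¬ adj x y → ω t x y = 0) ∧ ω t x y = ω t y x}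

/-- Time-space shift `τ_{s,z}`. -/
def shiftD {d : ℕ} (s : ℝ) (z : V d) (ω : EnvD d) : EnvD d :=
  ⟨fun t x y => ω.1 (t + s) (x + z) (y + z), fun t x y => by
    have h : adj (x + z) (y + z) ↔ adj x y := by
      simp [adj, add_sub_add_right_eq_sub]
    exact ⟨fun hxy => (ω.2 (t + s) (x + z) (y + z)).1 (h.mpr hxy),
      fun hxy => (ω.2 (t + s) (x + z) (y + z)).2.1 fun hc => hxy (h.mp hc),
      (ω.2 (t + s) (x + z) (y + z)).2.2⟩⟩

/-- Assumption 1.1: `P` is a probability measure, stationary and ergodic with respect to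
time-space shifts, with first positive and negative moments of the conductances finite. -/
structure AssumptionD {d : ℕ} (P : Measure (EnvD d)) : Prop where
  isProb : IsProbabilityMeasure P
  stationary : ∀ (s : ℝ) (z : V d), MeasurePreserving (shiftD s z) P P
  ergodic : ∀ A : Set (EnvD d), MeasurableSet A →
    (∀ (s : ℝ) (z : V d), shiftD s z ⁻¹' A = A) → P A = 0 ∨ P A = 1
  momPlus : ∀ (t : ℝ) (x y : V d), adj x y → Integrable (fun ω : EnvD d => ω.1 t x y) P
  momMinus : ∀ (t : ℝ) (x y : V d), adj x y →
    Integrable (fun ω : EnvD d => (ω.1 t x y)⁻¹) P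

/-- The time-dependent generator `(L_t^ω f)(x) = Σ_{y∼x} ω_t(x,y)(f(y)-f(x))`. -/
def genD {d : ℕ} (ω : EnvD d) (t : ℝ) (f : V d → ℝ) (x : V d) : ℝ :=
  ∑ i : Fin d, (ω.1 t x (x + Pi.single i 1) * (f (x + Pi.single i 1) - f x)
    + ω.1 t x (x - Pi.single i 1) * (f (x - Pi.single i 1) - f x))

/-- The natural filtration `σ(X_s, s ≤ t)` on the path space `ℝ≥0 → ℤ^d`. -/
def pathFiltrationD {d : ℕ} :
    Filtration ℝ≥0 (inferInstance : MeasurableSpace (ℝ≥0 → V d)) where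
  seq t := ⨆ s ∈ Set.Iic t, MeasurableSpace.comap (fun X : ℝ≥0 → V d => X s) inferInstance
  mono' s t hst := biSup_mono fun u hu => le_trans hu hst
  le' t := iSup₂_le fun s _ => (measurable_pi_apply s).comap_le

/-- `Q` is the law of the random walk among the time-dependent conductances `ω`, started
at time `0` in `0`: a probability measure on paths, starting at `0`, with right-continuous
(piecewise constant) paths, solving the martingale problem for the generator `L_t^ω`. -/
def IsWalkLawD {d : ℕ} (ω : EnvD d) (Q : Measure (ℝ≥0 → V d)) : Prop :=
  IsProbabilityMeasure Q ∧
  (∀ᵐ X ∂Q, X 0 = 0) ∧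
  (∀ᵐ X ∂Q, ∀ t : ℝ≥0, ∀ᶠ s in nhdsWithin t (Set.Ici t), X s = X t) ∧
  ∀ f : V d → ℝ, (Function.support f).Finite →
    Martingale (fun (t : ℝ≥0) (X : ℝ≥0 → V d) =>
      f (X t) - ∫ s in (0 : ℝ)..(t : ℝ), genD ω s f (X s.toNNReal)) pathFiltrationD Q

/-- The vector-valued generator `(L_t^ω f)(x) = Σ_{y∼x} ω_t(x,y)(f(y)-f(x))`. -/
def genDV {d : ℕ} (ω : EnvD d) (t : ℝ) (f : V d → Fin d → ℝ) (x : V d) : Fin d → ℝ :=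
  ∑ i : Fin d, (ω.1 t x (x + Pi.single i 1) • (f (x + Pi.single i 1) - f x)
    + ω.1 t x (x - Pi.single i 1) • (f (x - Pi.single i 1) - f x))

/-- A measurable random field satisfying the (space) cocycle property. -/
def CocycleD {d : ℕ} (P : Measure (EnvD d)) (Ψ : EnvD d → V d → Fin d → ℝ) : Prop :=
  (∀ x, Measurable fun ω => Ψ ω x) ∧
    ∀ᵐ ω ∂P, ∀ x y : V d, Ψ (shiftD 0 x ω) (y - x) = Ψ ω y - Ψ ω x

/-- The squared `L²_cov`-norm `E[Σ_{x∼0} ω_0(0,x) |Ψ(ω,x)|²]` (Euclidean norm). -/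
def covNormSqD {d : ℕ} (P : Measure (EnvD d)) (Ψ : EnvD d → V d → Fin d → ℝ) : ℝ≥0∞ :=
  ∫⁻ ω, ENNReal.ofReal (∑ i : Fin d,
    (ω.1 0 0 (Pi.single i 1) * (∑ j, (Ψ ω (Pi.single i 1) j) ^ 2)
      + ω.1 0 0 (-Pi.single i 1) * (∑ j, (Ψ ω (-Pi.single i 1) j) ^ 2))) ∂P

/-- Membership in `L²_cov`. -/
def MemL2covD {d : ℕ} (P : Measure (EnvD d)) (Ψ : EnvD d → V d → Fin d → ℝ) : Prop :=
  CocycleD P Ψ ∧ covNormSqD P Ψ < ⊤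

/-- Membership in `L²_pot`, the closure in `L²_cov` of the gradients
`Dφ(ω,x) = φ(τ_{0,x}ω) - φ(ω)` of bounded measurable functions `φ`. -/
def MemL2potD {d : ℕ} (P : Measure (EnvD d)) (Ψ : EnvD d → V d → Fin d → ℝ) : Prop :=
  MemL2covD P Ψ ∧
    ∀ ε : ℝ, 0 < ε → ∃ φ : EnvD d → Fin d → ℝ, Measurable φ ∧ (∃ C : ℝ, ∀ ω, ‖φ ω‖ ≤ C) ∧
      covNormSqD P (fun ω x => Ψ ω x - (φ (shiftD 0 x ω) - φ ω)) < ENNReal.ofReal ε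

/-- The position field `Π(ω,x) = x`. -/
def PiD {d : ℕ} : EnvD d → V d → Fin d → ℝ := fun _ x i => (x i : ℝ)

/-- The harmonic coordinate
`Φ(ω,t,x) = Φ₀(τ_{t,0}ω, x) - ∫_0^t (L_s^ω Φ₀(τ_{s,0}ω, ·))(0) ds`. -/
def PhiFD {d : ℕ} (Φ₀ : EnvD d → V d → Fin d → ℝ) (ω : EnvD d) (t : ℝ) (x : V d) :
    Fin d → ℝ :=
  Φ₀ (shiftD t 0 ω) x - ∫ s in (0 : ℝ)..t, genDV ω s (fun y => Φ₀ (shiftD s 0 ω) y) 0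

/-- The corrector `χ(ω,t,x) = Π(ω,x) - Φ(ω,t,x)`. -/
def chiD {d : ℕ} (Φ₀ : EnvD d → V d → Fin d → ℝ) (ω : EnvD d) (t : ℝ) (x : V d) :
    Fin d → ℝ :=
  PiD ω x - PhiFD Φ₀ ω t x

/-- `Φ₀` has the properties of Theorem 2.3: `Φ₀ ∈ L²_cov`, `χ₀ = Π - Φ₀ ∈ L²_pot`, and
for `P`-a.e. `ω` the function `Φ` built from `Φ₀` satisfies `Φ(ω,0,0) = 0` and is, for
every `x`, differentiable at a.e. `t` with `∂_t Φ(ω,t,x) = -(L_t^ω Φ(ω,t,·))(x)`. -/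
def IsHarmonicCoordD {d : ℕ} (P : Measure (EnvD d)) (Φ₀ : EnvD d → V d → Fin d → ℝ) :
    Prop :=
  MemL2covD P Φ₀ ∧ MemL2potD P (fun ω x => PiD ω x - Φ₀ ω x) ∧
    ∀ᵐ ω ∂P, PhiFD Φ₀ ω 0 0 = 0 ∧ ∀ x : V d, ∀ᵐ t : ℝ ∂volume,
      HasDerivAt (fun s => PhiFD Φ₀ ω s x)
        (-(genDV ω t (fun y => PhiFD Φ₀ ω t y) x)) t

lemma amgm (n S a l : ℝ) (hn0 : 0 ≤ n) (hn2 : n^2 ≤ S) (ha : 0 < a) (hl : 0 < l) :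
    n ≤ (l * a⁻¹ + l⁻¹ * (a * S)) / 2 := by
  have hS : 0 ≤ S := le_trans (sq_nonneg n) hn2
  have hu : 0 ≤ l * a⁻¹ := by positivity
  have hv : 0 ≤ l⁻¹ * (a * S) := by positivity
  have hS' : (l * a⁻¹) * (l⁻¹ * (a * S)) = S := by field_simp
  have hn2' : n^2 ≤ (l * a⁻¹) * (l⁻¹ * (a * S)) := by rw [hS']; exact hn2
  nlinarith [sq_nonneg (l * a⁻¹ - l⁻¹ * (a * S)), hn2', hn0, hu, hv]

lemma norm_sq_le_sum_sq {d : ℕ} (x : Fin d → ℝ) : ‖x‖^2 ≤ ∑ j, (x j)^2 := by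
  have hS : 0 ≤ ∑ j, (x j)^2 := Finset.sum_nonneg fun j _ => sq_nonneg _
  have h : ‖x‖ ≤ Real.sqrt (∑ j, (x j)^2) := by
    rw [pi_norm_le_iff_of_nonneg (Real.sqrt_nonneg _)]
    intro j
    refine Real.le_sqrt_of_sq_le ?_
    calc ‖x j‖^2 = (x j)^2 := by rw [Real.norm_eq_abs, sq_abs]
      _ ≤ ∑ j, (x j)^2 := Finset.single_le_sum (fun j _ => sq_nonneg (x j)) (Finset.mem_univ j)
  calc ‖x‖^2 ≤ Real.sqrt (∑ j, (x j)^2)^2 := pow_le_pow_left₀ (norm_nonneg _) h 2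
    _ = _ := Real.sq_sqrt hS

lemma adj_zero_unit {d : ℕ} (e : V d) (i : Fin d)
    (he : e = Pi.single i 1 ∨ e = -Pi.single i 1) : adj (0 : V d) e := by
  rcases he with rfl | rfl <;>
    simp [adj, Pi.single_apply, apply_ite, Finset.sum_ite_eq']

lemma env_nonneg {d : ℕ} (ω : EnvD d) (t : ℝ) (x y : V d) : 0 ≤ ω.1 t x y := by
  by_cases h : adj x y
  · exact ((ω.2 t x y).1 h).le
  · rw [(ω.2 t x y).2.1 h]

lemma env_meas {d : ℕ} (t : ℝ) (x y : V d) :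
    Measurable fun ω : EnvD d => ω.1 t x y :=
  (measurable_pi_apply y).comp ((measurable_pi_apply x).comp
    ((measurable_pi_apply t).comp measurable_subtype_coe))

lemma key_bound {d : ℕ} (P : Measure (EnvD d)) (hP : AssumptionD P)
    (Ψ : EnvD d → V d → Fin d → ℝ) (e : V d) (i : Fin d)
    (he : e = Pi.single i 1 ∨ e = -Pi.single i 1)
    (hm : Measurable fun ω => Ψ ω e)
    (hfin : covNormSqD P Ψ ≠ ⊤) :
    Integrable (fun ω => Ψ ω e) P ∧
    ∀ l : ℝ, 0 < l → ‖∫ ω, Ψ ω e ∂P‖ ≤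
      (l * ∫ ω : EnvD d, (ω.1 0 0 e)⁻¹ ∂P + l⁻¹ * (covNormSqD P Ψ).toReal) / 2 := by
  haveI := hP.isProb
  have hadj : adj (0 : V d) e := adj_zero_unit e i he
  set a : EnvD d → ℝ := fun ω => ω.1 0 0 e with ha'
  set S : EnvD d → ℝ := fun ω => ∑ j, (Ψ ω e j)^2 with hS'
  have hma : Measurable a := env_meas 0 0 e
  have hmS : Measurable S :=
    Finset.measurable_sum _ fun j _ => ((measurable_pi_apply j).comp hm).pow_const 2
  have hapos : ∀ ω, 0 < a ω := fun ω => (ω.2 0 0 e).1 hadj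
  have hS0 : ∀ ω, 0 ≤ S ω := fun ω => Finset.sum_nonneg fun j _ => sq_nonneg _
  have haS0 : ∀ ω, 0 ≤ a ω * S ω := fun ω => mul_nonneg (hapos ω).le (hS0 ω)
  have hsumle : ∀ ω : EnvD d, a ω * S ω ≤ ∑ k : Fin d,
      (ω.1 0 0 (Pi.single k 1) * (∑ j, (Ψ ω (Pi.single k 1) j) ^ 2)
        + ω.1 0 0 (-Pi.single k 1) * (∑ j, (Ψ ω (-Pi.single k 1) j) ^ 2)) := by
    intro ω
    have hterm : ∀ k : Fin d,
        0 ≤ ω.1 0 0 (Pi.single k 1) * (∑ j, (Ψ ω (Pi.single k 1) j) ^ 2)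
          + ω.1 0 0 (-Pi.single k 1) * (∑ j, (Ψ ω (-Pi.single k 1) j) ^ 2) := fun k =>
      add_nonneg
        (mul_nonneg (env_nonneg _ _ _ _) (Finset.sum_nonneg fun j _ => sq_nonneg _))
        (mul_nonneg (env_nonneg _ _ _ _) (Finset.sum_nonneg fun j _ => sq_nonneg _))
    have hone : a ω * S ω ≤ ω.1 0 0 (Pi.single i 1) * (∑ j, (Ψ ω (Pi.single i 1) j) ^ 2)
        + ω.1 0 0 (-Pi.single i 1) * (∑ j, (Ψ ω (-Pi.single i 1) j) ^ 2) := by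
      rcases he with rfl | rfl
      · exact le_add_of_nonneg_right
          (mul_nonneg (env_nonneg _ _ _ _) (Finset.sum_nonneg fun j _ => sq_nonneg _))
      · exact le_add_of_nonneg_left
          (mul_nonneg (env_nonneg _ _ _ _) (Finset.sum_nonneg fun j _ => sq_nonneg _))
    exact hone.trans (Finset.single_le_sum (fun k _ => hterm k) (Finset.mem_univ i))
  have hlint : ∫⁻ ω, ENNReal.ofReal (a ω * S ω) ∂P ≤ covNormSqD P Ψ :=
    lintegral_mono fun ω => ENNReal.ofReal_le_ofReal (hsumle ω)
  have hintaS : Integrable (fun ω => a ω * S ω) P := by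
    refine ⟨(hma.mul hmS).aestronglyMeasurable, ?_⟩
    have hnn : (fun ω => (‖a ω * S ω‖₊ : ℝ≥0∞)) = fun ω => ENNReal.ofReal (a ω * S ω) :=
      funext fun ω => Real.enorm_eq_ofReal (haS0 ω)
    show (∫⁻ ω, (‖a ω * S ω‖₊ : ℝ≥0∞) ∂P) < ⊤
    rw [hnn]
    exact lt_of_le_of_lt hlint hfin.lt_top
  have hintainv : Integrable (fun ω => (a ω)⁻¹) P := hP.momMinus 0 0 e hadj
  have hpt : ∀ l : ℝ, 0 < l → ∀ ω, ‖Ψ ω e‖ ≤ (l * (a ω)⁻¹ + l⁻¹ * (a ω * S ω)) / 2 :=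
    fun l hl ω => amgm _ _ _ _ (norm_nonneg _) (norm_sq_le_sum_sq _) (hapos ω) hl
  have hg : ∀ l : ℝ, Integrable (fun ω => (l * (a ω)⁻¹ + l⁻¹ * (a ω * S ω)) / 2) P :=
    fun l => ((hintainv.const_mul l).add (hintaS.const_mul l⁻¹)).div_const 2
  constructor
  · exact Integrable.mono' (hg 1) hm.aestronglyMeasurable (ae_of_all _ (hpt 1 one_pos))
  · intro l hl
    have hTle : ∫ ω, a ω * S ω ∂P ≤ (covNormSqD P Ψ).toReal := by
      have heq : ∫ ω, a ω * S ω ∂P = (∫⁻ ω, ENNReal.ofReal (a ω * S ω) ∂P).toReal :=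
        integral_eq_lintegral_of_nonneg_ae (ae_of_all _ haS0)
          (hma.mul hmS).aestronglyMeasurable
      rw [heq]
      exact ENNReal.toReal_mono hfin hlint
    calc ‖∫ ω, Ψ ω e ∂P‖
        ≤ ∫ ω, (l * (a ω)⁻¹ + l⁻¹ * (a ω * S ω)) / 2 ∂P :=
          norm_integral_le_of_norm_le (hg l) (ae_of_all _ (hpt l hl))
      _ = (l * ∫ ω, (a ω)⁻¹ ∂P + l⁻¹ * ∫ ω, a ω * S ω ∂P) / 2 := by
          rw [integral_div, integral_add (hintainv.const_mul l) (hintaS.const_mul l⁻¹),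
            integral_const_mul, integral_const_mul]
      _ ≤ (l * ∫ ω : EnvD d, (ω.1 0 0 e)⁻¹ ∂P + l⁻¹ * (covNormSqD P Ψ).toReal) / 2 := by
          gcongr

/-- Corollary 2.5: (i) `χ₀(·,ê)` is `P`-integrable with mean zero for every unit
coordinate direction `ê`; (ii) for `P`-a.e. `ω`, all `t` and `x`,
`χ(ω,t,x) = χ₀(τ_{t,0}ω, x) + ∫_0^t (L_s^ω Φ₀(τ_{s,0}ω, ·))(0) ds`. -/
theorem corrector_properties {d : ℕ} (hd : 1 ≤ d)
    (P : Measure (EnvD d)) (hP : AssumptionD P)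
    (Φ₀ : EnvD d → V d → Fin d → ℝ) (hΦ : IsHarmonicCoordD P Φ₀) :
    (∀ e : V d, (∃ i : Fin d, e = Pi.single i 1 ∨ e = -Pi.single i 1) →
      Integrable (fun ω : EnvD d => PiD ω e - Φ₀ ω e) P ∧
        ∫ ω : EnvD d, (PiD ω e - Φ₀ ω e) ∂P = 0) ∧
    (∀ᵐ ω ∂P, ∀ (t : ℝ) (x : V d),
      chiD Φ₀ ω t x = (PiD (shiftD t 0 ω) x - Φ₀ (shiftD t 0 ω) x)
        + ∫ s in (0 : ℝ)..t, genDV ω s (fun y => Φ₀ (shiftD s 0 ω) y) 0) := by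
  haveI := hP.isProb
  obtain ⟨hΦcov, hΦpot, -⟩ := hΦ
  obtain ⟨⟨⟨hΨmeas, -⟩, hΨfin⟩, happrox⟩ := hΦpot
  constructor
  · rintro e ⟨i, he⟩
    have hadj : adj (0 : V d) e := adj_zero_unit e i he
    obtain ⟨hint, -⟩ := key_bound P hP (fun ω x => PiD ω x - Φ₀ ω x) e i he
      (hΨmeas e) hΨfin.ne
    refine ⟨hint, ?_⟩
    have hM0 : 0 ≤ ∫ ω : EnvD d, (ω.1 0 0 e)⁻¹ ∂P :=
      integral_nonneg fun ω => inv_nonneg.mpr (env_nonneg _ _ _ _)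
    set M := ∫ ω : EnvD d, (ω.1 0 0 e)⁻¹ ∂P with hM
    have hkey : ∀ ε : ℝ, 0 < ε →
        ‖∫ ω, (PiD ω e - Φ₀ ω e) ∂P‖ ≤ ε := by
      intro ε hε
      set l : ℝ := ε / (M + 1) with hl'
      have hMpos : (0:ℝ) < M + 1 := by linarith
      have hl : 0 < l := div_pos hε hMpos
      obtain ⟨φ, hφm, ⟨C, hC⟩, hcov⟩ := happrox (l^2) (by positivity)
      set Δ : EnvD d → V d → Fin d → ℝ :=
        fun ω x => (PiD ω x - Φ₀ ω x) - (φ (shiftD 0 x ω) - φ ω) with hΔdef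
      have hshiftm : Measurable (shiftD 0 e) := (hP.stationary 0 e).measurable
      have hΔm : Measurable fun ω => Δ ω e :=
        (hΨmeas e).sub ((hφm.comp hshiftm).sub hφm)
      obtain ⟨hΔint, hΔbound⟩ := key_bound P hP Δ e i he hΔm (hcov.trans_le le_top).ne
      have hφint : Integrable φ P :=
        Integrable.mono' (integrable_const C) hφm.aestronglyMeasurable (ae_of_all _ hC)
      have hφsint : Integrable (fun ω => φ (shiftD 0 e ω)) P :=
        Integrable.mono' (integrable_const C) (hφm.comp hshiftm).aestronglyMeasurable
          (ae_of_all _ fun ω => hC _)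
      have hmapeq : Measure.map (shiftD 0 e) P = P := (hP.stationary 0 e).map_eq
      have h1 : ∫ y, φ y ∂(Measure.map (shiftD 0 e) P) = ∫ ω, φ (shiftD 0 e ω) ∂P :=
        integral_map hshiftm.aemeasurable (by rw [hmapeq]; exact hφm.aestronglyMeasurable)
      have hcomp : ∫ ω, φ (shiftD 0 e ω) ∂P = ∫ ω, φ ω ∂P := by rw [← h1, hmapeq]
      have hDφ0 : ∫ ω, (φ (shiftD 0 e ω) - φ ω) ∂P = 0 := by
        rw [integral_sub hφsint hφint, hcomp, sub_self]
      have hinteq : ∫ ω, (PiD ω e - Φ₀ ω e) ∂P = ∫ ω, Δ ω e ∂P := by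
        have h2 : ∫ ω, Δ ω e ∂P
            = ∫ ω, (PiD ω e - Φ₀ ω e) ∂P - ∫ ω, (φ (shiftD 0 e ω) - φ ω) ∂P :=
          integral_sub hint (hφsint.sub hφint)
        rw [h2, hDφ0, sub_zero]
      have hT : (covNormSqD P Δ).toReal ≤ l^2 :=
        le_trans (ENNReal.toReal_mono ENNReal.ofReal_ne_top hcov.le)
          (le_of_eq (ENNReal.toReal_ofReal (by positivity)))
      have hll : l⁻¹ * l^2 = l := by field_simp [pow_two]
      have hlM : l * (M + 1) = ε := div_mul_cancel₀ ε hMpos.ne'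
      calc ‖∫ ω, (PiD ω e - Φ₀ ω e) ∂P‖ = ‖∫ ω, Δ ω e ∂P‖ := by rw [hinteq]
        _ ≤ (l * M + l⁻¹ * (covNormSqD P Δ).toReal) / 2 := hΔbound l hl
        _ ≤ (l * M + l⁻¹ * l^2) / 2 := by gcongr
        _ = l * (M + 1) / 2 := by rw [hll]; ring
        _ ≤ ε := by rw [hlM]; linarith
    by_contra hne
    have hpos : 0 < ‖∫ ω, (PiD ω e - Φ₀ ω e) ∂P‖ := by
      rcases lt_or_eq_of_le (norm_nonneg (∫ ω, (PiD ω e - Φ₀ ω e) ∂P)) with h | h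
      · exact h
      · exact absurd (norm_eq_zero.mp h.symm) hne
    linarith [hkey (‖∫ ω, (PiD ω e - Φ₀ ω e) ∂P‖ / 2) (by linarith)]
  · refine ae_of_all _ fun ω t x => ?_
    show PiD ω x - (Φ₀ (shiftD t 0 ω) x
        - ∫ s in (0:ℝ)..t, genDV ω s (fun y => Φ₀ (shiftD s 0 ω) y) 0)
      = (PiD (shiftD t 0 ω) x - Φ₀ (shiftD t 0 ω) x)
        + ∫ s in (0:ℝ)..t, genDV ω s (fun y => Φ₀ (shiftD s 0 ω) y) 0
    have hpi : PiD (d := d) ω x = PiD (shiftD t 0 ω) x := rfl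
    rw [hpi]
    abel

end
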